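/- Let F_{ab} be antisymmetric on Minkowski 4-space with invariants F, G, let σ be real with D := 1 + σF - σ²G² ≠ 0, and let g̃^{bc} = η^{bc} + σ F^{bd}F^c{}_d. Define g̃⁻¹_{cd} = (η_{cd} - σ (⋆F)_c{}^b (⋆F)_{db}) / D. Then g̃⁻¹_{ac} g̃^{cb} = δ_a^b, i.e., g̃⁻¹ is the matrix inverse of the optical metric. Moreover g̃⁻¹_{cd} = ((1+σF) η_{cd} - σ F_c{}^b F_{db}) / D. -/

import Mathlib

open Finset

noncomputable section

/-- Minkowski metric η = diag(-1,1,1,1) (equal to its own inverse). -/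
def eta : Matrix (Fin 4) (Fin 4) ℝ :=
  Matrix.of fun a b => if a = b then (if a = 0 then (-1 : ℝ) else 1) else 0

/-- Levi-Civita symbol with ε₀₁₂₃ = 1 (Vandermonde formula). -/
def eps (a b c d : Fin 4) : ℝ :=
  (((b : ℕ) : ℝ) - ((a : ℕ) : ℝ)) * (((c : ℕ) : ℝ) - ((a : ℕ) : ℝ)) *
  (((d : ℕ) : ℝ) - ((a : ℕ) : ℝ)) * (((c : ℕ) : ℝ) - ((b : ℕ) : ℝ)) *
  (((d : ℕ) : ℝ) - ((b : ℕ) : ℝ)) * (((d : ℕ) : ℝ) - ((c : ℕ) : ℝ)) / 12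

/-- F^{ab}: both indices raised with η. -/
def raise (F : Matrix (Fin 4) (Fin 4) ℝ) : Matrix (Fin 4) (Fin 4) ℝ :=
  Matrix.of fun a b => ∑ c, ∑ d, eta a c * eta b d * F c d

/-- F_a{}^b: second index raised. -/
def mixdu (F : Matrix (Fin 4) (Fin 4) ℝ) : Matrix (Fin 4) (Fin 4) ℝ :=
  Matrix.of fun a b => ∑ c, F a c * eta c b

/-- F^a{}_b: first index raised. -/
def mixud (F : Matrix (Fin 4) (Fin 4) ℝ) : Matrix (Fin 4) (Fin 4) ℝ :=
  Matrix.of fun a b => ∑ c, eta a c * F c b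

/-- Hodge dual (⋆F)_{ab} = (1/2) ε_{abcd} F^{cd}. -/
def hodge (F : Matrix (Fin 4) (Fin 4) ℝ) : Matrix (Fin 4) (Fin 4) ℝ :=
  Matrix.of fun a b => (1 / 2) * ∑ c, ∑ d, eps a b c d * raise F c d

/-- Invariant F = (1/2) F_{ab} F^{ab}. -/
def invF (F : Matrix (Fin 4) (Fin 4) ℝ) : ℝ :=
  (1 / 2) * ∑ a, ∑ b, F a b * raise F a b

/-- Invariant G = -(1/4) F_{ab} (⋆F)^{ab}. -/
def invG (F : Matrix (Fin 4) (Fin 4) ℝ) : ℝ :=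
  -(1 / 4) * ∑ a, ∑ b, F a b * raise (hodge F) a b

/-- raise the index of a covector: p^a = η^{ab} p_b. -/
def vup (p : Fin 4 → ℝ) : Fin 4 → ℝ := fun a => ∑ b, eta a b * p b

/-- scalar contraction x_a y^a of two covectors. -/
def contra (x y : Fin 4 → ℝ) : ℝ := ∑ a, ∑ b, x a * eta a b * y b

/-- u_a = F_{ab} p^b. -/
def lower (F : Matrix (Fin 4) (Fin 4) ℝ) (p : Fin 4 → ℝ) : Fin 4 → ℝ :=
  fun a => ∑ b, F a b * vup p b

def AntisymM4 (F : Matrix (Fin 4) (Fin 4) ℝ) : Prop := ∀ a b, F a b = - F b a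

/-- optical metric g̃^{bc} = η^{bc} + σ F^{bd} F^c{}_d. -/
def gtil (F : Matrix (Fin 4) (Fin 4) ℝ) (σ : ℝ) : Matrix (Fin 4) (Fin 4) ℝ :=
  Matrix.of fun b c => eta b c + σ * ∑ d, raise F b d * mixud F c d

/-- the matrix M_b{}^d of the zeroth-order field equation. -/
def Mmat (F : Matrix (Fin 4) (Fin 4) ℝ) (p : Fin 4 → ℝ)
    (LF LFF LFG LGG : ℝ) : Matrix (Fin 4) (Fin 4) ℝ :=
  Matrix.of fun b d =>
    -2 * LF * contra p p * (if b = d then (1 : ℝ) else 0)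
    + 2 * LF * p b * vup p d
    - 4 * LFF * lower F p b * vup (lower F p) d
    + 2 * LFG * (lower F p b * vup (lower (hodge F) p) d
        + lower (hodge F) p b * vup (lower F p) d)
    - LGG * lower (hodge F) p b * vup (lower (hodge F) p) d

/-! With `A = F η` and `B = (⋆F) η`, antisymmetry of `F` and `⋆F` turns the optical metric into
`g̃ = η (1 - σ A²)` and `D g̃⁻¹` into `(1 + σ B²) η`. In four dimensions `B A = G` and
`B² - A² = F` (as multiples of the identity), so
`(1 + σ B²)(1 - σ A²) = 1 + σ (B² - A²) - σ² B (B A) A = 1 + σ F - σ² G²`,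
and `B² = A² + F` also gives the second form of `g̃⁻¹`. -/

open scoped Matrix

theorem one_add_smul_sq_mul_one_sub_smul_sq {R A : Type*} [CommRing R] [Ring A] [Algebra R A]
    {a b : A} {f g : R} (σ : R) (hba : b * a = g • 1) (hsq : b ^ 2 - a ^ 2 = f • 1) :
    (1 + σ • b ^ 2) * (1 - σ • a ^ 2) = (1 + σ * f - σ ^ 2 * g ^ 2) • (1 : A) := by
  have hquartic : b ^ 2 * a ^ 2 = g ^ 2 • (1 : A) := by
    calc b ^ 2 * a ^ 2 = b * (b * a) * a := by noncomm_ring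
      _ = g ^ 2 • (1 : A) := by rw [hba, mul_smul_one, smul_mul_assoc, hba, smul_smul, sq]
  calc (1 + σ • b ^ 2) * (1 - σ • a ^ 2)
      = 1 + σ • (b ^ 2 - a ^ 2) - σ ^ 2 • (b ^ 2 * a ^ 2) := by
        simp only [add_mul, mul_sub, one_mul, mul_one, smul_mul_smul_comm, smul_sub, sq σ]; abel
    _ = (1 + σ * f - σ ^ 2 * g ^ 2) • (1 : A) := by
        rw [hsq, hquartic, smul_smul, smul_smul, sub_smul, add_smul, one_smul]

theorem eta_eq : eta = !![-1, 0, 0, 0; 0, 1, 0, 0; 0, 0, 1, 0; 0, 0, 0, 1] := by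
  ext a b; fin_cases a <;> fin_cases b <;> rfl

theorem eta_mul_eta : eta * eta = 1 := by
  ext a b; fin_cases a <;> fin_cases b <;> simp [eta, Matrix.mul_apply]

theorem eta_transpose : etaᵀ = eta := by
  ext a b; fin_cases a <;> fin_cases b <;> simp [eta]

theorem raise_eq (F : Matrix (Fin 4) (Fin 4) ℝ) : raise F = eta * F * eta := by
  ext a b; simp [raise, eta, Matrix.mul_apply]

theorem sum_mixdu_mul (M N : Matrix (Fin 4) (Fin 4) ℝ) (c d : Fin 4) :
    ∑ b, mixdu M c b * N d b = (M * eta * Nᵀ) c d := rfl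

theorem eps_swap (a b c d : Fin 4) : eps b a c d = -eps a b c d := by
  unfold eps; ring

theorem antisymM4_hodge (F : Matrix (Fin 4) (Fin 4) ℝ) : AntisymM4 (hodge F) := by
  intro a b
  simp only [hodge, Matrix.of_apply, eps_swap b a, neg_mul, Finset.sum_neg_distrib, mul_neg]

def antisymOf (x01 x02 x03 x12 x13 x23 : ℝ) : Matrix (Fin 4) (Fin 4) ℝ :=
  !![0, x01, x02, x03; -x01, 0, x12, x13; -x02, -x12, 0, x23; -x03, -x13, -x23, 0]

section antisymOf

variable (x01 x02 x03 x12 x13 x23 : ℝ)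

theorem hodge_antisymOf :
    hodge (antisymOf x01 x02 x03 x12 x13 x23) = antisymOf x23 (-x13) x12 (-x03) x02 (-x01) := by
  ext a b
  fin_cases a <;> fin_cases b <;>
    simp [hodge, raise, antisymOf, eta, eps, Fin.sum_univ_four] <;> ring

theorem invF_antisymOf :
    invF (antisymOf x01 x02 x03 x12 x13 x23) =
      x12 ^ 2 + x13 ^ 2 + x23 ^ 2 - x01 ^ 2 - x02 ^ 2 - x03 ^ 2 := by
  simp [invF, raise, antisymOf, eta, Fin.sum_univ_four]; ring

theorem invG_antisymOf :
    invG (antisymOf x01 x02 x03 x12 x13 x23) = x01 * x23 - x02 * x13 + x03 * x12 := by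
  rw [invG, hodge_antisymOf]; simp [raise, antisymOf, eta, Fin.sum_univ_four]; ring

theorem antisymOf_mul_eta : antisymOf x01 x02 x03 x12 x13 x23 * eta =
    !![0, x01, x02, x03; x01, 0, x12, x13; x02, -x12, 0, x23; x03, -x13, -x23, 0] := by
  rw [eta_eq, antisymOf]
  ext a b
  fin_cases a <;> fin_cases b <;> simp [Matrix.mul_apply, Fin.sum_univ_four]

end antisymOf

/-- `D g̃⁻¹` in its first form, `η_{cd} - σ (⋆F)_c{}^b (⋆F)_{db}`. -/
def scaledGtilInv (F : Matrix (Fin 4) (Fin 4) ℝ) (σ : ℝ) : Matrix (Fin 4) (Fin 4) ℝ :=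
  eta - σ • (hodge F * eta * (hodge F)ᵀ)

namespace AntisymM4

variable {F : Matrix (Fin 4) (Fin 4) ℝ}

theorem transpose_eq (hF : AntisymM4 F) : Fᵀ = -F := by
  ext a b; exact hF b a

theorem eta_sub_smul_mul_eta_mul_transpose (hF : AntisymM4 F) (σ : ℝ) :
    eta - σ • (F * eta * Fᵀ) = (1 + σ • (F * eta) ^ 2) * eta := by
  rw [hF.transpose_eq, sq, Matrix.add_mul, Matrix.one_mul, Matrix.smul_mul,
    Matrix.mul_assoc (F * eta) (F * eta) eta, Matrix.mul_assoc F eta eta, eta_mul_eta,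
    Matrix.mul_one, Matrix.mul_neg, smul_neg, sub_neg_eq_add]

theorem gtil_eq (hF : AntisymM4 F) (σ : ℝ) : gtil F σ = eta * (1 - σ • (F * eta) ^ 2) := by
  have hgtil : gtil F σ = eta + σ • (raise F * (mixud F)ᵀ) := by
    ext b c; simp [gtil, Matrix.mul_apply]
  rw [hgtil, raise_eq, show mixud F = eta * F from rfl, Matrix.transpose_mul, hF.transpose_eq,
    eta_transpose, Matrix.mul_sub, Matrix.mul_one, Matrix.mul_smul, sub_eq_add_neg, ← smul_neg]
  simp only [sq, Matrix.mul_neg, Matrix.neg_mul, Matrix.mul_assoc]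

theorem exists_eq_antisymOf (hF : AntisymM4 F) :
    ∃ x01 x02 x03 x12 x13 x23, F = antisymOf x01 x02 x03 x12 x13 x23 := by
  have hdiag : ∀ a, F a a = 0 := fun a => by linarith [hF a a]
  refine ⟨F 0 1, F 0 2, F 0 3, F 1 2, F 1 3, F 2 3, ?_⟩
  ext a b
  fin_cases a <;> fin_cases b <;>
    simp [antisymOf, hdiag, hF 1 0, hF 2 0, hF 2 1, hF 3 0, hF 3 1, hF 3 2]

-- `(⋆F)_{ac} F^{bc} = -G δ_a^b` in matrix form
theorem hodge_mul_eta_mul_mul_eta (hF : AntisymM4 F) :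
    hodge F * eta * (F * eta) = invG F • 1 := by
  obtain ⟨x01, x02, x03, x12, x13, x23, rfl⟩ := hF.exists_eq_antisymOf
  rw [hodge_antisymOf, invG_antisymOf, antisymOf_mul_eta, antisymOf_mul_eta]
  ext a b
  fin_cases a <;> fin_cases b <;> simp <;> ring

-- `F_{ac} F^{bc} - (⋆F)_{ac} (⋆F)^{bc} = F δ_a^b` in matrix form
theorem sq_hodge_mul_eta_sub_sq_mul_eta (hF : AntisymM4 F) :
    (hodge F * eta) ^ 2 - (F * eta) ^ 2 = invF F • 1 := by
  obtain ⟨x01, x02, x03, x12, x13, x23, rfl⟩ := hF.exists_eq_antisymOf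
  rw [hodge_antisymOf, invF_antisymOf, antisymOf_mul_eta, antisymOf_mul_eta, sq, sq]
  ext a b
  fin_cases a <;> fin_cases b <;> simp <;> ring

theorem scaledGtilInv_mul_gtil (hF : AntisymM4 F) (σ : ℝ) :
    scaledGtilInv F σ * gtil F σ = (1 + σ * invF F - σ ^ 2 * invG F ^ 2) • 1 := by
  rw [scaledGtilInv, (antisymM4_hodge F).eta_sub_smul_mul_eta_mul_transpose, hF.gtil_eq,
    Matrix.mul_assoc, ← Matrix.mul_assoc eta, eta_mul_eta, Matrix.one_mul]
  exact one_add_smul_sq_mul_one_sub_smul_sq σ hF.hodge_mul_eta_mul_mul_eta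
    hF.sq_hodge_mul_eta_sub_sq_mul_eta

theorem scaledGtilInv_eq (hF : AntisymM4 F) (σ : ℝ) :
    scaledGtilInv F σ = (1 + σ * invF F) • eta - σ • (F * eta * Fᵀ) := by
  have hF_form := hF.eta_sub_smul_mul_eta_mul_transpose σ
  rw [Matrix.add_mul, Matrix.one_mul, Matrix.smul_mul] at hF_form
  rw [scaledGtilInv, (antisymM4_hodge F).eta_sub_smul_mul_eta_mul_transpose,
    ← sub_add_cancel ((hodge F * eta) ^ 2) ((F * eta) ^ 2), hF.sq_hodge_mul_eta_sub_sq_mul_eta]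
  simp only [Matrix.add_mul, Matrix.one_mul, Matrix.smul_mul, smul_add]
  linear_combination (norm := module) -hF_form

end AntisymM4

/-- With D = 1 + σF - σ²G² ≠ 0, the matrix
    g̃⁻¹_{cd} = (η_{cd} - σ (⋆F)_c{}^b (⋆F)_{db})/D is the inverse of the
    optical metric, and also equals ((1+σF)η_{cd} - σ F_c{}^b F_{db})/D. -/
theorem stmt6 (F : Matrix (Fin 4) (Fin 4) ℝ) (hF : AntisymM4 F) (σ : ℝ)
    (hD : 1 + σ * invF F - σ ^ 2 * (invG F) ^ 2 ≠ 0) :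
    let D := 1 + σ * invF F - σ ^ 2 * (invG F) ^ 2
    let ginv : Matrix (Fin 4) (Fin 4) ℝ := Matrix.of fun c d =>
      (eta c d - σ * ∑ b, mixdu (hodge F) c b * hodge F d b) / D
    (∀ a b, ∑ c, ginv a c * gtil F σ c b = if a = b then (1 : ℝ) else 0) ∧
    (∀ c d, ginv c d =
      ((1 + σ * invF F) * eta c d - σ * ∑ b, mixdu F c b * F d b) / D) := by
  intro D ginv
  have hginv : ginv = D⁻¹ • scaledGtilInv F σ := by
    ext c d
    simp [ginv, scaledGtilInv, sum_mixdu_mul, div_eq_inv_mul]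
  have hinv : ginv * gtil F σ = 1 := by
    rw [hginv, Matrix.smul_mul, hF.scaledGtilInv_mul_gtil, smul_smul, inv_mul_cancel₀ hD,
      one_smul]
  refine ⟨fun a b => by simpa [Matrix.mul_apply, Matrix.one_apply] using congrFun₂ hinv a b,
    fun c d => ?_⟩
  rw [hginv, hF.scaledGtilInv_eq]
  simp [sum_mixdu_mul, div_eq_inv_mul]

end
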